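/- arXiv:1305.1746 — 3 statements merged into one kernel-verified Lean document; each statement's English description precedes it below -/
import Mathlib

section
/- Let 𝒳 ∈ ℝ^{2n×2n} be symmetric positive definite with first block column [X; U] and with 𝒳^{-1} having first block column [Y; V] (all blocks n×n). Then the 2n×2n matrix [[Y, I],[I, X]] is positive semidefinite; if in addition U has full column rank, then [[Y, I],[I, X]] is positive definite. -/
open Matrix

/-- Let `𝒳 ≻ 0` be `2n×2n` with first block column `[X; U]` and `𝒳⁻¹` with first block
column `[Y; V]`. Then `[[Y, I],[I, X]] ⪰ 0`; if moreover `U` has full column rank, then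
`[[Y, I],[I, X]] ≻ 0`. -/
theorem coupling_posSemidef {n : ℕ}
    (𝒳 : Matrix (Fin n ⊕ Fin n) (Fin n ⊕ Fin n) ℝ) (h : 𝒳.PosDef) :
    (fromBlocks ((𝒳⁻¹).toBlocks₁₁) 1 1 (𝒳.toBlocks₁₁)).PosSemidef ∧
      (Function.Injective (𝒳.toBlocks₂₁).mulVec →
        (fromBlocks ((𝒳⁻¹).toBlocks₁₁) 1 1 (𝒳.toBlocks₁₁)).PosDef) := by
  set Z := 𝒳⁻¹ with hZdef
  have hZ : Z.IsHermitian := h.inv.isHermitian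
  have hU : IsUnit 𝒳 := h.isUnit
  have hZX : Z * 𝒳 = 1 := nonsing_inv_mul 𝒳 (isUnit_iff_isUnit_det _ |>.1 hU)
  have hXZ : 𝒳 * Z = 1 := mul_nonsing_inv 𝒳 (isUnit_iff_isUnit_det _ |>.1 hU)
  set E₁ : Matrix (Fin n ⊕ Fin n) (Fin n ⊕ Fin n) ℝ := fromBlocks 1 0 0 0 with hE₁
  set E₂ : Matrix (Fin n ⊕ Fin n) (Fin n ⊕ Fin n) ℝ := fromBlocks 0 1 0 0 with hE₂
  set W : Matrix (Fin n ⊕ Fin n) (Fin n ⊕ Fin n) ℝ := Z * E₁ + E₂ with hW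
  have t1 : E₁ᴴ * Z * E₁ = fromBlocks Z.toBlocks₁₁ 0 0 0 := by
    conv_lhs => rw [← fromBlocks_toBlocks Z]
    simp [hE₁, fromBlocks_conjTranspose, fromBlocks_transpose, fromBlocks_multiply]
  have t4 : E₂ᴴ * 𝒳 * E₂ = fromBlocks 0 0 0 𝒳.toBlocks₁₁ := by
    conv_lhs => rw [← fromBlocks_toBlocks 𝒳]
    simp [hE₂, fromBlocks_conjTranspose, fromBlocks_transpose, fromBlocks_multiply]
  have t2 : E₁ᴴ * E₂ = fromBlocks 0 1 0 0 := by
    simp [hE₁, hE₂, fromBlocks_conjTranspose, fromBlocks_transpose, fromBlocks_multiply]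
  have t3 : E₂ᴴ * E₁ = fromBlocks 0 0 1 0 := by
    simp [hE₁, hE₂, fromBlocks_conjTranspose, fromBlocks_transpose, fromBlocks_multiply]
  have key : Wᴴ * 𝒳 * W = fromBlocks (Z.toBlocks₁₁) 1 1 (𝒳.toBlocks₁₁) := by
    have e1 : Wᴴ = E₁ᴴ * Z + E₂ᴴ := by
      rw [hW, conjTranspose_add, conjTranspose_mul, hZ.eq]
    calc Wᴴ * 𝒳 * W = E₁ᴴ * (Z * 𝒳 * Z) * E₁ + E₁ᴴ * (Z * 𝒳) * E₂
          + E₂ᴴ * (𝒳 * Z) * E₁ + E₂ᴴ * 𝒳 * E₂ := by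
          rw [e1, hW]; noncomm_ring
      _ = E₁ᴴ * Z * E₁ + E₁ᴴ * E₂ + E₂ᴴ * E₁ + E₂ᴴ * 𝒳 * E₂ := by
          rw [hZX, hXZ, one_mul, mul_one, mul_one]
      _ = fromBlocks (Z.toBlocks₁₁) 1 1 (𝒳.toBlocks₁₁) := by
          rw [t1, t2, t3, t4]
          simp [fromBlocks_add]
  rw [← key]
  refine ⟨h.posSemidef.conjTranspose_mul_mul_same W, fun hUinj => ?_⟩
  refine PosDef.of_dotProduct_mulVec_pos ?_ ?_
  · exact isHermitian_conjTranspose_mul_mul W h.isHermitian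
  · intro x hx
    have hWx : W *ᵥ x ≠ 0 := by
      intro h0
      apply hx
      have h1 : (𝒳 * W) *ᵥ x = 0 := by rw [← mulVec_mulVec, h0, mulVec_zero]
      have h2 : 𝒳 * W = E₁ + 𝒳 * E₂ := by
        rw [hW, mul_add, ← mul_assoc, hXZ, one_mul]
      rw [h2] at h1
      set a : Fin n → ℝ := x ∘ Sum.inl with ha
      set b : Fin n → ℝ := x ∘ Sum.inr with hb
      have hxab : x = Sum.elim a b := by ext i; cases i <;> rfl
      have h3 : (E₁ + 𝒳 * E₂) *ᵥ x
          = Sum.elim (a + 𝒳.toBlocks₁₁ *ᵥ b) (𝒳.toBlocks₂₁ *ᵥ b) := by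
        rw [add_mulVec, ← mulVec_mulVec, hxab]
        conv_lhs => rw [← fromBlocks_toBlocks 𝒳]
        simp [hE₁, hE₂, fromBlocks_mulVec]
        ext i; cases i <;> simp
      rw [h3] at h1
      have hbz : b = 0 := by
        apply hUinj
        rw [mulVec_zero]
        ext i; exact congrFun h1 (Sum.inr i)
      have haz : a = 0 := by
        have := fun i => congrFun h1 (Sum.inl i)
        simp only [Sum.elim_inl, hbz, mulVec_zero, add_zero] at this
        ext i; exact this i
      rw [hxab, haz, hbz]; ext i; cases i <;> simp
    have := h.dotProduct_mulVec_pos hWx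
    simpa only [star_mulVec, dotProduct_mulVec, vecMul_vecMul, ← mul_assoc] using this
end

section
/- (Structured projection lemma, necessity) Let Q ∈ ℝ^{n×n}, and let M_1,…,M_p (with M_{p+1} := 0) and N_1,…,N_p (with N_0 := 0) be real matrices with n columns satisfying ker(M_j) ⊆ ker(M_{j+1}) for j = 1,…,p−1. If there exist matrices S_1,…,S_p (of compatible sizes) with He(Q + Σ_{j=1}^p M_j^T S_j N_j) ≺ 0, then for each j = 1,…,p+1, the symmetric matrix He(Q) is negative definite on the subspace ker(N_0) ∩ ⋯ ∩ ker(N_{j−1}) ∩ ker(M_j). -/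
open Matrix

lemma aux_dot {n a b : ℕ} (A : Matrix (Fin a) (Fin n) ℝ) (C : Matrix (Fin a) (Fin b) ℝ)
    (B : Matrix (Fin b) (Fin n) ℝ) (x : Fin n → ℝ) :
    x ⬝ᵥ ((Aᵀ * C * B) *ᵥ x) = (A *ᵥ x) ⬝ᵥ (C *ᵥ (B *ᵥ x)) := by
  rw [Matrix.mul_assoc, ← mulVec_mulVec, dotProduct_mulVec, vecMul_transpose, ← mulVec_mulVec]

lemma sum_mulVec' {m n : ℕ} {ι : Type*} [DecidableEq ι] (s : Finset ι) (A : ι → Matrix (Fin m) (Fin n) ℝ)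
    (x : Fin n → ℝ) : (∑ k ∈ s, A k) *ᵥ x = ∑ k ∈ s, A k *ᵥ x := by
  induction s using Finset.induction with
  | empty => simp
  | insert _ _ h ih => simp [Finset.sum_insert h, add_mulVec, ih]

lemma dot_sum' {n : ℕ} {ι : Type*} [DecidableEq ι] (s : Finset ι) (x : Fin n → ℝ)
    (v : ι → Fin n → ℝ) : x ⬝ᵥ (∑ k ∈ s, v k) = ∑ k ∈ s, x ⬝ᵥ v k := by
  induction s using Finset.induction with
  | empty => simp
  | insert _ _ h ih => simp [Finset.sum_insert h, dotProduct_add, ih]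

/-- Structured projection lemma (necessity): if matrices `M_1,…,M_p` (with `M_{p+1} = 0`),
`N_1,…,N_p` (with `N_0 = 0`) satisfy `ker M_j ⊆ ker M_{j+1}` and there exist `S_1,…,S_p`
with `He(Q + ∑_j M_jᵀ S_j N_j) ≺ 0`, then for each `j = 1,…,p+1` the matrix `He(Q)` is
negative definite on `ker N_0 ∩ ⋯ ∩ ker N_{j-1} ∩ ker M_j`. -/
theorem structured_projection_necessity {n : ℕ} (p : ℕ) (mdim ndim : ℕ → ℕ)
    (Q : Matrix (Fin n) (Fin n) ℝ)
    (M : (j : ℕ) → Matrix (Fin (mdim j)) (Fin n) ℝ)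
    (N : (j : ℕ) → Matrix (Fin (ndim j)) (Fin n) ℝ)
    (hMlast : M (p + 1) = 0) (hN0 : N 0 = 0)
    (hker : ∀ j, 1 ≤ j → j ≤ p - 1 → ∀ x : Fin n → ℝ, M j *ᵥ x = 0 → M (j + 1) *ᵥ x = 0)
    (h : ∃ S : (j : ℕ) → Matrix (Fin (mdim j)) (Fin (ndim j)) ℝ,
      ∀ x : Fin n → ℝ, x ≠ 0 →
        x ⬝ᵥ (((Q + ∑ j ∈ Finset.Icc 1 p, (M j)ᵀ * S j * N j) +
               (Q + ∑ j ∈ Finset.Icc 1 p, (M j)ᵀ * S j * N j)ᵀ) *ᵥ x) < 0) :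
    ∀ j, 1 ≤ j → j ≤ p + 1 → ∀ x : Fin n → ℝ, x ≠ 0 →
      (∀ ν, ν < j → N ν *ᵥ x = 0) → M j *ᵥ x = 0 →
      x ⬝ᵥ ((Q + Qᵀ) *ᵥ x) < 0 := by
  intro j hj1 hjp x hx hNx hMx
  obtain ⟨S, hS⟩ := h
  have hS := hS x hx
  -- chain: M k x = 0 for all k ≥ j
  have hchain : ∀ k, j ≤ k → k ≤ p → M k *ᵥ x = 0 := by
    intro k hk
    induction k, hk using Nat.le_induction with
    | base => intro _; exact hMx
    | succ k hk ih =>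
      intro hkp
      by_cases hcase : k + 1 = p + 1
      · rw [hcase, hMlast]; simp
      · exact hker k (le_trans hj1 hk) (by omega) x (ih (by omega))
  have hterm : ∀ k ∈ Finset.Icc 1 p,
      (M k *ᵥ x = 0) ∨ (N k *ᵥ x = 0) := by
    intro k hk
    simp only [Finset.mem_Icc] at hk
    rcases lt_or_ge k j with hlt | hle
    · exact Or.inr (hNx k hlt)
    · exact Or.inl (hchain k hle hk.2)
  set Sig := ∑ j ∈ Finset.Icc 1 p, (M j)ᵀ * S j * N j with hSig
  have hsum1 : x ⬝ᵥ (Sig *ᵥ x) = 0 := by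
    rw [hSig, sum_mulVec', dot_sum']
    refine Finset.sum_eq_zero fun k hk => ?_
    rw [aux_dot]
    rcases hterm k hk with h0 | h0 <;> rw [h0] <;> simp
  have hsum2 : x ⬝ᵥ (Sigᵀ *ᵥ x) = 0 := by
    rw [dotProduct_mulVec, vecMul_transpose, dotProduct_comm]
    exact hsum1
  rw [transpose_add, add_mulVec, add_mulVec, add_mulVec, dotProduct_add, dotProduct_add,
    dotProduct_add, hsum1, hsum2] at hS
  rw [add_mulVec, dotProduct_add]
  linarith
end

section
/- Let 𝒜, ℬ, 𝒞, 𝒟 be real matrices of sizes N×N, N×m, k×N, k×m and γ > 0. If there exists a symmetric matrix 𝒳 ≻ 0 with [[𝒜^T𝒳 + 𝒳𝒜, 𝒳ℬ, 𝒞^T],[ℬ^T𝒳, −γI, 𝒟^T],[𝒞, 𝒟, −γI]] ≺ 0, then 𝒜 is Hurwitz (all eigenvalues of 𝒜 have negative real part). -/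
open Matrix

open scoped ComplexOrder

private lemma dot_symm_aux {n : Type*} [Fintype n] {M : Matrix n n ℂ} (hM : Mᵀ = M)
    (v w : n → ℂ) : v ⬝ᵥ M *ᵥ w = w ⬝ᵥ M *ᵥ v := by
  rw [dotProduct_mulVec, ← mulVec_transpose, hM, dotProduct_comm]

private lemma mulVec_map_ofReal {n p : Type*} [Fintype n] [Fintype p]
    (M : Matrix n p ℝ) (v : p → ℝ) :
    (M.map Complex.ofReal) *ᵥ (fun i => ((v i : ℝ) : ℂ)) = fun i => ((M *ᵥ v) i : ℂ) := by
  funext i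
  simp [mulVec, dotProduct]

private lemma dot_map_ofReal {n : Type*} [Fintype n] (M : Matrix n n ℝ) (v : n → ℝ) :
    (fun i => ((v i : ℝ) : ℂ)) ⬝ᵥ (M.map Complex.ofReal) *ᵥ (fun i => ((v i : ℝ) : ℂ))
      = ((v ⬝ᵥ M *ᵥ v : ℝ) : ℂ) := by
  rw [mulVec_map_ofReal]
  simp [dotProduct, mulVec]

private lemma posDef_map_ofReal {n : Type*} [Fintype n] {M : Matrix n n ℝ}
    (hM : M.PosDef) : (M.map Complex.ofReal).PosDef := by
  have hMs : Mᵀ = M := by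
    ext i j
    have := congrFun (congrFun hM.1 i) j
    simpa [conjTranspose_apply] using this
  have hMcs : (M.map Complex.ofReal)ᵀ = M.map Complex.ofReal := by
    rw [← transpose_map, hMs]
  refine posDef_iff_dotProduct_mulVec.mpr ⟨?_, ?_⟩
  · ext i j
    have := congrFun (congrFun hMs j) i
    simp only [conjTranspose_apply, map_apply, transpose_apply] at this ⊢
    rw [Complex.star_def, Complex.conj_ofReal, this]
  · intro z hz
    set a : n → ℝ := fun i => (z i).re with ha
    set b : n → ℝ := fun i => (z i).im with hb
    set za : n → ℂ := fun i => ((a i : ℝ) : ℂ) with hza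
    set zb : n → ℂ := fun i => ((b i : ℝ) : ℂ) with hzb
    have hzeq : z = za + Complex.I • zb := by
      funext i
      apply Complex.ext <;>
        simp [hza, hzb, ha, hb]
    have hstar : star z = za - Complex.I • zb := by
      funext i
      apply Complex.ext <;>
        simp [hza, hzb, ha, hb]
    set Mc := M.map Complex.ofReal with hMc
    have key : star z ⬝ᵥ Mc *ᵥ z = za ⬝ᵥ Mc *ᵥ za + zb ⬝ᵥ Mc *ᵥ zb := by
      rw [hstar]
      conv_lhs => rw [hzeq]
      rw [mulVec_add, mulVec_smul]
      rw [sub_dotProduct, dotProduct_add, dotProduct_add, smul_dotProduct, smul_dotProduct,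
        dotProduct_smul, dotProduct_smul]
      have hsym := dot_symm_aux hMcs za zb
      simp only [smul_eq_mul]
      rw [hsym]
      ring_nf
      rw [Complex.I_sq]
      ring
    have hda : za ⬝ᵥ Mc *ᵥ za = ((a ⬝ᵥ M *ᵥ a : ℝ) : ℂ) := dot_map_ofReal M a
    have hdb : zb ⬝ᵥ Mc *ᵥ zb = ((b ⬝ᵥ M *ᵥ b : ℝ) : ℂ) := dot_map_ofReal M b
    have hab : a ≠ 0 ∨ b ≠ 0 := by
      by_contra hcon
      push_neg at hcon
      apply hz
      funext i
      apply Complex.ext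
      · have := congrFun hcon.1 i; simpa [ha] using this
      · have := congrFun hcon.2 i; simpa [hb] using this
    have hpos : 0 < a ⬝ᵥ M *ᵥ a + b ⬝ᵥ M *ᵥ b := by
      have h1 : 0 ≤ a ⬝ᵥ M *ᵥ a := by simpa using hM.posSemidef.dotProduct_mulVec_nonneg a
      have h2 : 0 ≤ b ⬝ᵥ M *ᵥ b := by simpa using hM.posSemidef.dotProduct_mulVec_nonneg b
      rcases hab with hne | hne
      · have := hM.dotProduct_mulVec_pos hne
        simp only [star_trivial] at this
        linarith
      · have := hM.dotProduct_mulVec_pos hne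
        simp only [star_trivial] at this
        linarith
    rw [key, hda, hdb, ← Complex.ofReal_add]
    exact_mod_cast hpos

private lemma map_mul_ofReal {p q r : Type*} [Fintype q]
    (P : Matrix p q ℝ) (Q : Matrix q r ℝ) :
    (P * Q).map Complex.ofReal = P.map Complex.ofReal * Q.map Complex.ofReal := by
  ext i j
  simp [Matrix.mul_apply]

/-- Bounded real lemma, stability part: if there is a symmetric `𝒳 ≻ 0` with
`[[𝒜ᵀ𝒳 + 𝒳𝒜, 𝒳ℬ, 𝒞ᵀ],[ℬᵀ𝒳, −γI, 𝒟ᵀ],[𝒞, 𝒟, −γI]] ≺ 0`, then `𝒜` is Hurwitz. -/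
theorem hurwitz_of_lmi {N m k : ℕ}
    (A : Matrix (Fin N) (Fin N) ℝ) (B : Matrix (Fin N) (Fin m) ℝ)
    (C : Matrix (Fin k) (Fin N) ℝ) (D : Matrix (Fin k) (Fin m) ℝ)
    (γ : ℝ) (hγ : 0 < γ)
    (h : ∃ X : Matrix (Fin N) (Fin N) ℝ, X.PosDef ∧
      (-(fromBlocks (Aᵀ * X + X * A) (fromCols (X * B) Cᵀ)
          (fromRows (Bᵀ * X) C)
          (fromBlocks (-(γ • (1 : Matrix (Fin m) (Fin m) ℝ))) Dᵀ
            D (-(γ • (1 : Matrix (Fin k) (Fin k) ℝ)))))).PosDef) :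
    ∀ μ : ℂ, μ ∈ spectrum ℂ (A.map (Complex.ofReal)) → μ.re < 0 := by
  obtain ⟨X, hX, hM⟩ := h
  have hXs : Xᵀ = X := by
    ext i j
    have := congrFun (congrFun hX.1 i) j
    simpa [conjTranspose_apply] using this
  -- Step 1: the (1,1) block is negative definite
  have hQ : (-(Aᵀ * X + X * A)).PosDef := by
    refine posDef_iff_dotProduct_mulVec.mpr ⟨?_, ?_⟩
    · ext i j
      simp only [conjTranspose_apply, Matrix.neg_apply, star_trivial, neg_inj]
      rw [show ((Aᵀ * X + X * A) j i) = ((Aᵀ * X + X * A)ᵀ i j) from rfl]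
      rw [transpose_add, transpose_mul, transpose_mul, transpose_transpose, hXs]
      simp [Matrix.add_apply, add_comm]
    · intro x hx
      have hy : (Sum.elim x (0 : (Fin m ⊕ Fin k) → ℝ)) ≠ 0 := by
        intro hcon
        apply hx
        funext i
        have := congrFun hcon (Sum.inl i)
        simpa using this
      have hbig := hM.dotProduct_mulVec_pos hy
      rw [neg_mulVec, fromBlocks_mulVec, dotProduct_neg] at hbig
      simp only [mulVec_zero, add_zero, star_trivial, Sum.elim_comp_inl, Sum.elim_comp_inr,
        sumElim_dotProduct_sumElim, zero_dotProduct, dotProduct_add] at hbig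
      rw [neg_mulVec, dotProduct_neg, star_trivial]
      linarith
  -- Step 2: complexify
  set Ac := A.map Complex.ofReal with hAc
  set Xc := X.map Complex.ofReal with hXc
  have hXcpd : Xc.PosDef := posDef_map_ofReal hX
  have hQcpd : ((-(Aᵀ * X + X * A)).map Complex.ofReal).PosDef := posDef_map_ofReal hQ
  -- Step 3: eigenvector
  intro μ hμ
  rw [spectrum.mem_iff] at hμ
  have hdet : (algebraMap ℂ (Matrix (Fin N) (Fin N) ℂ) μ - Ac).det = 0 := by
    by_contra hd
    exact hμ ((Matrix.isUnit_iff_isUnit_det _).mpr (isUnit_iff_ne_zero.mpr hd))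
  obtain ⟨v, hv0, hv⟩ := (Matrix.exists_mulVec_eq_zero_iff).mpr hdet
  have hAv : Ac *ᵥ v = μ • v := by
    have : (algebraMap ℂ (Matrix (Fin N) (Fin N) ℂ) μ) *ᵥ v - Ac *ᵥ v = 0 := by
      rw [← sub_mulVec]; exact hv
    have h2 : (algebraMap ℂ (Matrix (Fin N) (Fin N) ℂ) μ) *ᵥ v = μ • v := by
      rw [Algebra.algebraMap_eq_smul_one, smul_mulVec, one_mulVec]
    rw [h2] at this
    exact (sub_eq_zero.mp this).symm
  -- Step 4: Lyapunov computation
  set c : ℂ := star v ⬝ᵥ Xc *ᵥ v with hc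
  have hcpos : 0 < c := hXcpd.dotProduct_mulVec_pos hv0
  have hcre : 0 < c.re := (Complex.lt_def.mp hcpos).1
  have hcim : c.im = 0 := ((Complex.lt_def.mp hcpos).2).symm
  have hAcH : Acᴴ = Aᵀ.map Complex.ofReal := by
    ext i j
    simp [conjTranspose_apply, Complex.conj_ofReal, hAc]
  have hmap : (Aᵀ * X + X * A).map Complex.ofReal = Acᴴ * Xc + Xc * Ac := by
    rw [hAcH]
    ext i j
    simp [Matrix.mul_apply, Matrix.add_apply, hAc, hXc]
  have hd : star v ⬝ᵥ ((Aᵀ * X + X * A).map Complex.ofReal) *ᵥ v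
      = (starRingEnd ℂ) μ * c + μ * c := by
    rw [hmap, add_mulVec, dotProduct_add, ← mulVec_mulVec, ← mulVec_mulVec]
    congr 1
    · rw [dotProduct_mulVec, ← star_mulVec, hAv, star_smul, smul_dotProduct]
      simp [hc, smul_eq_mul, Complex.star_def]
    · rw [hAv, mulVec_smul, dotProduct_smul, smul_eq_mul, hc]
  have hneg : 0 < -(star v ⬝ᵥ ((Aᵀ * X + X * A).map Complex.ofReal) *ᵥ v) := by
    have := hQcpd.dotProduct_mulVec_pos hv0
    have hmapneg : (-(Aᵀ * X + X * A)).map Complex.ofReal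
        = -((Aᵀ * X + X * A).map Complex.ofReal) := by
      ext i j; simp
    rw [hmapneg, neg_mulVec, dotProduct_neg] at this
    exact this
  rw [hd] at hneg
  have hre : ((starRingEnd ℂ) μ * c + μ * c).re < 0 := by
    have := (Complex.lt_def.mp hneg).1
    simp only [Complex.neg_re, Complex.zero_re] at this
    linarith
  have hre2 : (2 * μ.re) * c.re < 0 := by
    have hexp : ((starRingEnd ℂ) μ * c + μ * c).re = (2 * μ.re) * c.re := by
      simp [Complex.add_re, Complex.mul_re, Complex.conj_re, Complex.conj_im, hcim]
      ring
    rw [hexp] at hre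
    exact hre
  nlinarith
end
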